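/- Assume Schanuel's conjecture for ℂ. Let a₁,…,aₘ ∈ ℚ̄[x] be nonzero polynomials and g₁,…,gₘ ∈ ℚ̄[x] pairwise distinct polynomials (m ≥ 1), and set p(z) = Σᵢ aᵢ(z)·exp(gᵢ(z)). Then the set {β ∈ ℂ : β algebraic and p(β) = 0} is finite. -/

import Mathlib

/-!
The exponents `gᵢ(β)` at an algebraic point `β` are algebraic numbers, and a `ℤ`-basis `z` of
the lattice they span is `ℚ`-linearly independent, so Schanuel's conjecture makes the `exp zⱼ`
algebraically independent over `ℚ`, hence over `ℚ̄`. When the `gᵢ(β)` are distinct, the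
`exp (gᵢ(β))` are distinct Laurent monomials in the `exp zⱼ`, hence `ℚ̄`-linearly independent,
and every `aᵢ(β)` must vanish. So an algebraic zero is a root of `a₁` or a point where two of the
`gᵢ` agree, and there are finitely many of each.
-/

def SchanuelConjecture : Prop :=
  ∀ (n : ℕ) (z : Fin n → ℂ), LinearIndependent ℚ z →
    ∃ s : Finset (Fin n ⊕ Fin n), n ≤ s.card ∧
      AlgebraicIndependent ℚ
        (fun i : s => Sum.elim z (fun j => Complex.exp (z j)) i)

open Function Polynomial

theorem exists_linearIndependent_rat_of_int_combination {V ι : Type*} [AddCommGroup V]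
    [Module ℚ V] [Finite ι] (α : ι → V) :
    ∃ (n : ℕ) (z : Fin n → V) (m : ι → Fin n → ℤ), LinearIndependent ℚ z ∧
      (∀ j, z j ∈ Submodule.span ℤ (Set.range α)) ∧ ∀ i, α i = ∑ j, m i j • z j := by
  set L := Submodule.span ℤ (Set.range α)
  have : IsAddTorsionFree V := .of_module_rat V
  have : Module.Finite ℤ L := .span_of_finite ℤ (Set.finite_range α)
  let b := Module.finBasis ℤ L
  refine ⟨_, fun j => b j, fun i => b.repr ⟨α i, Submodule.subset_span ⟨i, rfl⟩⟩,
    (LinearIndependent.iff_fractionRing ℤ ℚ).mp (b.linearIndependent.map' L.subtype L.ker_subtype),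
    fun j => (b j).2, fun i => ?_⟩
  have := congrArg L.subtype (b.sum_repr ⟨α i, Submodule.subset_span ⟨i, rfl⟩⟩)
  rw [map_sum] at this
  exact this.symm

theorem SchanuelConjecture.algebraicIndependent_exp (hSch : SchanuelConjecture) {n : ℕ}
    {z : Fin n → ℂ} (hz : LinearIndependent ℚ z) (halg : ∀ j, IsAlgebraic ℚ (z j)) :
    AlgebraicIndependent ℚ fun j => Complex.exp (z j) := by
  obtain ⟨s, hcard, hs⟩ := hSch n z hz
  have hsub : s ⊆ Finset.univ.map .inr := by
    rintro (j | j) hj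
    · exact absurd (halg j) (hs.transcendental ⟨_, hj⟩)
    · simp
  have hs_eq : s = Finset.univ.map .inr :=
    Finset.eq_of_subset_of_card_le hsub (by simpa using hcard)
  exact hs.comp (fun j => ⟨.inr j, by simp [hs_eq]⟩)
    fun j j' h => Sum.inr_injective (congrArg Subtype.val h)

theorem AlgebraicIndependent.linearIndependent_prod_pow {ι K A : Type*} [Fintype ι] [CommRing K]
    [CommRing A] [Algebra K A] {x : ι → A} (hx : AlgebraicIndependent K x) :
    LinearIndependent K fun d : ι →₀ ℕ => ∏ j, x j ^ d j := by
  have := (MvPolynomial.basisMonomials ι K).linearIndependent.map'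
    (MvPolynomial.aeval x).toLinearMap (LinearMap.ker_eq_bot.mpr hx)
  simpa [comp_def, MvPolynomial.aeval_monomial, Finsupp.prod_fintype] using this

theorem AlgebraicIndependent.linearIndependent_prod_zpow {ι K A : Type*} [Fintype ι] [Field K]
    [Field A] [Algebra K A] {x : ι → A} (hx : AlgebraicIndependent K x) :
    LinearIndependent K fun e : ι → ℤ => ∏ j, x j ^ e j := by
  rw [linearIndependent_iff_finset_linearIndependent]
  intro s
  -- multiplying by `∏ j, x j ^ N` turns the Laurent monomials indexed by `s` into monomials
  obtain ⟨N, hN⟩ := Finite.exists_le fun p : s × ι => (p.1.1 p.2).natAbs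
  have hshift : ∀ (e : s) j, ((e.1 j + N).toNat : ℤ) = e.1 j + N := fun e j =>
    Int.toNat_of_nonneg (by have := hN (e, j); dsimp only at this; omega)
  let shift (e : s) : ι →₀ ℕ := Finsupp.equivFunOnFinite.symm fun j => (e.1 j + N).toNat
  have hshift_inj : Injective shift := fun e e' h => Subtype.ext <| funext fun j => by
    have := congrArg (fun d : ι →₀ ℕ => (d j : ℤ)) h
    simp only [shift, Finsupp.coe_equivFunOnFinite_symm, hshift] at this
    omega
  have hu : ∏ j, x j ^ N ≠ 0 :=
    Finset.prod_ne_zero_iff.mpr fun j _ => pow_ne_zero _ (hx.ne_zero j)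
  have hmul : ∀ e : s, ∏ j, x j ^ e.1 j = (∏ j, x j ^ N)⁻¹ * ∏ j, x j ^ shift e j := by
    intro e
    rw [eq_inv_mul_iff_mul_eq₀ hu, ← Finset.prod_mul_distrib]
    refine Finset.prod_congr rfl fun j _ => ?_
    show _ = x j ^ (e.1 j + N).toNat
    rw [← zpow_natCast (x j) N, ← zpow_add₀ (hx.ne_zero j), ← zpow_natCast, hshift, add_comm]
  have := (hx.linearIndependent_prod_pow.comp shift hshift_inj).map' (LinearMap.mulLeft K _)
    (LinearMap.ker_eq_bot.mpr (mul_right_injective₀ (inv_ne_zero hu)))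
  rwa [show _ ∘ Subtype.val = _ from funext hmul]

theorem SchanuelConjecture.eq_zero_of_sum_mul_exp_eq_zero (hSch : SchanuelConjecture)
    {ι : Type*} [Fintype ι] {α c : ι → ℂ} (hα : ∀ i, IsAlgebraic ℚ (α i))
    (hc : ∀ i, IsAlgebraic ℚ (c i)) (hinj : Injective α)
    (hsum : ∑ i, c i * Complex.exp (α i) = 0) (i : ι) : c i = 0 := by
  obtain ⟨n, z, m, hz, hz_span, hαz⟩ := exists_linearIndependent_rat_of_int_combination α
  have hz_alg (j : Fin n) : IsAlgebraic ℚ (z j) := by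
    refine Submodule.span_induction (p := fun y _ => IsAlgebraic ℚ y) ?_ ?_ ?_ ?_ (hz_span j)
    · rintro _ ⟨i, rfl⟩
      exact hα i
    · exact isAlgebraic_zero
    · exact fun _ _ _ _ hy hy' => hy.add hy'
    · exact fun k _ _ hy => by simpa using hy.zsmul k
  have hexp (i : ι) : Complex.exp (α i) = ∏ j, Complex.exp (z j) ^ m i j := by
    simp [hαz i, Complex.exp_sum, ← Complex.exp_int_mul]
  have hm : Injective m := fun i i' h => hinj (by rw [hαz, hαz, h])
  have hli := ((hSch.algebraicIndependent_exp hz hz_alg).algebraicClosure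
    |>.linearIndependent_prod_zpow).comp m hm
  have := Fintype.linearIndependent_iff.mp hli
    (fun i => ⟨c i, mem_algebraicClosure_iff.mpr (hc i)⟩)
    (by simpa [Algebra.smul_def, IntermediateField.algebraMap_apply, hexp] using hsum) i
  simpa using congrArg Subtype.val this

theorem Polynomial.isAlgebraic_eval {p : ℂ[X]} (hp : ∀ k, IsAlgebraic ℚ (p.coeff k)) {x : ℂ}
    (hx : IsAlgebraic ℚ x) : IsAlgebraic ℚ (p.eval x) := by
  simp only [← mem_algebraicClosure_iff, eval_eq_sum_range] at *
  exact sum_mem fun k _ => mul_mem (hp k) (pow_mem hx k)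

theorem Polynomial.finite_setOf_not_injective_eval {ι R : Type*} [Finite ι] [CommRing R]
    [IsDomain R] {g : ι → R[X]} (hg : Injective g) :
    {x | ¬Injective fun i => (g i).eval x}.Finite := by
  refine (Set.finite_iUnion fun i => Set.finite_iUnion fun j => Set.finite_iUnion
    fun hij : i ≠ j => finite_setOfPred_isRoot (sub_ne_zero.mpr (hg.ne hij))).subset ?_
  intro x hx
  simp only [Injective, not_forall] at hx
  obtain ⟨i, j, hx, hij⟩ := hx
  simp only [Set.mem_iUnion]
  exact ⟨i, j, hij, by simp [hx]⟩

theorem finitely_many_algebraic_zeros (hSch : SchanuelConjecture)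
    (m : ℕ) (hm : 1 ≤ m) (a g : Fin m → Polynomial ℂ)
    (ha : ∀ i k, IsAlgebraic ℚ ((a i).coeff k))
    (hane : ∀ i, a i ≠ 0)
    (hg : ∀ i k, IsAlgebraic ℚ ((g i).coeff k))
    (hgdist : ∀ i j, i ≠ j → g i ≠ g j) :
    {β : ℂ | IsAlgebraic ℚ β ∧
      ∑ i, (a i).eval β * Complex.exp ((g i).eval β) = 0}.Finite := by
  let i₀ : Fin m := ⟨0, hm⟩
  have hg_inj : Injective g := fun i j h => by_contra fun hij => hgdist i j hij h
  refine ((finite_setOfPred_isRoot (hane i₀)).union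
    (finite_setOf_not_injective_eval hg_inj)).subset ?_
  rintro β ⟨hβ, hsum⟩
  by_cases hcol : Injective fun i => (g i).eval β
  · exact .inl (hSch.eq_zero_of_sum_mul_exp_eq_zero (fun i => isAlgebraic_eval (hg i) hβ)
      (fun i => isAlgebraic_eval (ha i) hβ) hcol hsum i₀)
  · exact .inr hcol
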